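/- Let d be the pseudometric on ℕ_{≥1} × ℕ_{≥1} defined by d((n,m),(n',m')) = 0 if n = n' and m = m'; 0 if n = n', min{m,m'} = 1 and max{m,m'} > n; 0 if n = n' and min{m,m'} > n; 2^{−n} if n = n' and none of the previous cases hold; and 2·∑_{k=min{n,n'}}^{max{n,n'}} k^{−2} if n ≠ n', and let X be the associated quotient metric space. Then X has infinite Assouad dimension: for every n, the closed ball B((n,1), 2^{−n}) contains n points that are pairwise at distance exactly 2^{−n}, so N(B((n,1),2^{−n}), 2^{−(n+1)}) ≥ n, and hence there are no constants C > 0 and α ≥ 0 with sup_x N(B(x,R),r) ≤ C·(R/r)^α for all 0 < r < R < 1. -/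

import Mathlib

open Finset

/-- The distance function on `ℕ≥1 × ℕ≥1` from the paper:
`d((n,m),(n',m')) = 0` if `n = n'` and `m = m'`; `0` if `n = n'`, `min{m,m'} = 1` and
`max{m,m'} > n`; `0` if `n = n'` and `min{m,m'} > n`; `2^{-n}` if `n = n'` and none of the
previous cases hold; and `2·∑_{k=min{n,n'}}^{max{n,n'}} k^{-2}` if `n ≠ n'`. -/
noncomputable def starExDist (p q : ℕ+ × ℕ+) : ℝ :=
  if p.1 = q.1 then
    if p.2 = q.2 then 0
    else if min p.2 q.2 = 1 ∧ (p.1 : ℕ) < (max p.2 q.2 : ℕ) then 0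
    else if (p.1 : ℕ) < (min p.2 q.2 : ℕ) then 0
    else (1 / 2 : ℝ) ^ (p.1 : ℕ)
  else 2 * ∑ k ∈ Finset.Icc ((min p.1 q.1 : ℕ+) : ℕ) ((max p.1 q.1 : ℕ+) : ℕ), ((k : ℝ) ^ 2)⁻¹

/-!
Inside the `n`-th row, the points `(n, 1), …, (n, n)` are pairwise at distance exactly `2^{-n}`,
and they all lie in the ball of radius `2^{-n}` about `(n, 1)`. A set of diameter at most
`2^{-(n+1)}` contains at most one of them, so covering that ball at scale `2^{-(n+1)}` takes at
least `n` sets, although the ratio of the two scales is only `2`. Since `n` is arbitrary, no bound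
`C · (R / r)^α` on covering numbers can hold.
-/

section Covering

variable {X : Type*} (d : X → X → ℝ)

theorem card_le_card_of_separated_of_subset_biUnion {r : ℝ} {S : Finset X}
    {𝒰 : Finset (Set X)} (hS : ∀ p ∈ S, ∀ q ∈ S, p ≠ q → r < d p q)
    (h𝒰 : ∀ U ∈ 𝒰, ∀ a ∈ U, ∀ b ∈ U, d a b ≤ r) (hcover : (S : Set X) ⊆ ⋃ U ∈ 𝒰, U) :
    #S ≤ #𝒰 :=
  card_le_card_of_forall_subsingleton (· ∈ ·)
    (fun p hp => by simpa using hcover hp)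
    (fun U hU p ⟨hp, hpU⟩ q ⟨hq, hqU⟩ =>
      by_contra fun hne => (h𝒰 U hU p hpU q hqU).not_gt (hS p hp q hq hne))

theorem not_exists_covering_bound_of_forall_le_card (c : ℝ)
    (hlarge : ∀ K : ℕ, ∃ (x : X) (R r : ℝ), 0 < r ∧ r < R ∧ R < 1 ∧ R / r ≤ c ∧
      ∀ 𝒰 : Finset (Set X), (∀ U ∈ 𝒰, ∀ a ∈ U, ∀ b ∈ U, d a b ≤ r) →
        {p | d x p ≤ R} ⊆ ⋃ U ∈ 𝒰, U → K ≤ #𝒰) :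
    ¬ ∃ α : ℝ, 0 ≤ α ∧ ∃ C : ℝ, 0 < C ∧
      ∀ (x : X) (R r : ℝ), 0 < r → r < R → R < 1 →
        ∃ 𝒰 : Finset (Set X),
          (∀ U ∈ 𝒰, ∀ a ∈ U, ∀ b ∈ U, d a b ≤ r) ∧
          ({p | d x p ≤ R} ⊆ ⋃ U ∈ 𝒰, U) ∧
          (#𝒰 : ℝ) ≤ C * (R / r) ^ α := by
  rintro ⟨α, hα, C, hC, hbound⟩
  obtain ⟨K, hK_gt⟩ := exists_nat_gt (C * c ^ α)
  obtain ⟨x, R, r, hr, hrR, hR, hratio, hK⟩ := hlarge K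
  obtain ⟨𝒰, h𝒰, hcover, hcard⟩ := hbound x R r hr hrR hR
  have hratio_pow : (R / r) ^ α ≤ c ^ α :=
    Real.rpow_le_rpow (div_pos (hr.trans hrR) hr).le hratio hα
  have hK_le : (K : ℝ) ≤ #𝒰 := by exact_mod_cast hK 𝒰 h𝒰 hcover
  nlinarith

end Covering

theorem starExDist_self (p : ℕ+ × ℕ+) : starExDist p p = 0 := by
  simp [starExDist]

theorem starExDist_same_row {n m m' : ℕ+} (hm : m ≤ n) (hm' : m' ≤ n) (hne : m ≠ m') :
    starExDist (n, m) (n, m') = (1 / 2 : ℝ) ^ (n : ℕ) := by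
  have hmn : (m : ℕ) ≤ n := hm
  have hm'n : (m' : ℕ) ≤ n := hm'
  have hmax : ¬ (n : ℕ) < max (m : ℕ) m' := by omega
  have hmin : ¬ (n : ℕ) < min (m : ℕ) m' := by omega
  simp [starExDist, hne, hmax, hmin]

def starExRow (n : ℕ+) : Finset (ℕ+ × ℕ+) :=
  (Icc 1 n).map (Function.Embedding.sectR n ℕ+)

theorem card_starExRow (n : ℕ+) : #(starExRow n) = n := by
  simp [starExRow]

theorem mem_starExRow {n : ℕ+} {p : ℕ+ × ℕ+} : p ∈ starExRow n ↔ p.1 = n ∧ p.2 ≤ n := by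
  obtain ⟨a, b⟩ := p
  simp [starExRow, eq_comm, and_comm]

theorem starExDist_of_mem_starExRow {n : ℕ+} {p q : ℕ+ × ℕ+} (hp : p ∈ starExRow n)
    (hq : q ∈ starExRow n) (hne : p ≠ q) : starExDist p q = (1 / 2 : ℝ) ^ (n : ℕ) := by
  obtain ⟨a, m⟩ := p
  obtain ⟨b, m'⟩ := q
  obtain ⟨rfl, hm⟩ := mem_starExRow.mp hp
  obtain ⟨rfl, hm'⟩ := mem_starExRow.mp hq
  exact starExDist_same_row hm hm' fun h => hne (by rw [h])

theorem starExDist_le_of_mem_starExRow {n : ℕ+} {p : ℕ+ × ℕ+} (hp : p ∈ starExRow n) :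
    starExDist (n, 1) p ≤ (1 / 2 : ℝ) ^ (n : ℕ) := by
  have hn1 : (n, 1) ∈ starExRow n := mem_starExRow.mpr ⟨rfl, one_le⟩
  by_cases hp1 : (n, 1) = p
  · rw [← hp1, starExDist_self]
    positivity
  · exact (starExDist_of_mem_starExRow hn1 hp hp1).le

theorem le_card_of_covers_starExDist_ball (n : ℕ+) {𝒰 : Finset (Set (ℕ+ × ℕ+))}
    (h𝒰 : ∀ U ∈ 𝒰, ∀ a ∈ U, ∀ b ∈ U, starExDist a b ≤ (1 / 2 : ℝ) ^ ((n : ℕ) + 1))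
    (hcover : {p | starExDist (n, 1) p ≤ (1 / 2 : ℝ) ^ (n : ℕ)} ⊆ ⋃ U ∈ 𝒰, U) :
    (n : ℕ) ≤ #𝒰 := by
  rw [← card_starExRow n]
  refine card_le_card_of_separated_of_subset_biUnion starExDist (fun p hp q hq hne => ?_) h𝒰
    (subset_trans (fun p hp => starExDist_le_of_mem_starExRow hp) hcover)
  rw [starExDist_of_mem_starExRow hp hq hne]
  exact pow_lt_pow_right_of_lt_one₀ (by norm_num) (by norm_num) (Nat.lt_succ_self n)

/-- The quotient metric space of `starExDist` has infinite Assouad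
dimension: for every `n` the closed ball `B((n,1), 2^{-n})` contains `n` points that are
pairwise at distance exactly `2^{-n}`, so every cover of this ball by sets of diameter at
most `2^{-(n+1)}` needs at least `n` sets, and hence there are no constants `C > 0`, `α ≥ 0`
realising the Assouad covering bound. (Balls, diameters and covering numbers are expressed
directly through the pseudometric `starExDist`; they agree with those of the quotient
metric space.) -/
theorem starExDist_infinite_assouad :
    -- n points of the ball `B((n,1), 2^{-n})`, pairwise at distance exactly `2^{-n}`
    (∀ n : ℕ+, ∃ S : Finset (ℕ+ × ℕ+), S.card = (n : ℕ) ∧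
      (∀ p ∈ S, starExDist (n, 1) p ≤ (1 / 2 : ℝ) ^ (n : ℕ)) ∧
      (∀ p ∈ S, ∀ q ∈ S, p ≠ q → starExDist p q = (1 / 2 : ℝ) ^ (n : ℕ))) ∧
    -- hence `N(B((n,1),2^{-n}), 2^{-(n+1)}) ≥ n`
    (∀ n : ℕ+, ∀ 𝒰 : Finset (Set (ℕ+ × ℕ+)),
      (∀ U ∈ 𝒰, ∀ a ∈ U, ∀ b ∈ U, starExDist a b ≤ (1 / 2 : ℝ) ^ ((n : ℕ) + 1)) →
      ({p : ℕ+ × ℕ+ | starExDist (n, 1) p ≤ (1 / 2 : ℝ) ^ (n : ℕ)} ⊆ ⋃ U ∈ 𝒰, U) →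
      (n : ℕ) ≤ 𝒰.card) ∧
    -- and the Assouad dimension is infinite
    ¬ ∃ α : ℝ, 0 ≤ α ∧ ∃ C : ℝ, 0 < C ∧
      ∀ (x : ℕ+ × ℕ+) (R r : ℝ), 0 < r → r < R → R < 1 →
        ∃ 𝒰 : Finset (Set (ℕ+ × ℕ+)),
          (∀ U ∈ 𝒰, ∀ a ∈ U, ∀ b ∈ U, starExDist a b ≤ r) ∧
          ({p : ℕ+ × ℕ+ | starExDist x p ≤ R} ⊆ ⋃ U ∈ 𝒰, U) ∧
          (𝒰.card : ℝ) ≤ C * (R / r) ^ α := by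
  refine ⟨fun n => ⟨starExRow n, card_starExRow n, fun p => starExDist_le_of_mem_starExRow,
    fun p hp q hq => starExDist_of_mem_starExRow hp hq⟩,
    fun n _ => le_card_of_covers_starExDist_ball n, ?_⟩
  refine not_exists_covering_bound_of_forall_le_card starExDist 2 fun K => ?_
  set n : ℕ+ := K.succPNat
  refine ⟨(n, 1), (1 / 2) ^ (n : ℕ), (1 / 2) ^ ((n : ℕ) + 1), by positivity,
    pow_lt_pow_right_of_lt_one₀ (by norm_num) (by norm_num) (Nat.lt_succ_self n),
    pow_lt_one₀ (by norm_num) (by norm_num) n.ne_zero, ?_, fun 𝒰 h𝒰 hcover => ?_⟩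
  · rw [pow_succ, div_mul_cancel_left₀ (by positivity)]
    norm_num
  · exact (K.le_succ).trans (le_card_of_covers_starExDist_ball n h𝒰 hcover)
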